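/- arXiv:2211.11959 — 3 statements merged into one kernel-verified Lean document; each statement's English description precedes it below -/
import Mathlib

section
/- Let $X_i = \theta + \xi_i$, $i=1,\dots,n$, be i.i.d. with $\theta = \inf\{t : U(t) \ge 1/2\}$ where $U(t) = \mathbb{P}((X_1+X_2)/2 \le t)$. Suppose there exist $c_0, \kappa_0 > 0$ such that $U'(\theta+\delta) \ge \kappa_0$ for all $|\delta| \le c_0$. Let $\hat\theta = \inf\{t : U_n(t) \ge 1/2\}$ where $U_n(t) = \frac{1}{n(n-1)}\sum_{i \neq j}\mathbb{I}\{(X_i+X_j)/2 \le t\}$. Then for every $z > 0$, $\mathbb{P}(|\hat\theta - \theta| > z) \le 2\exp\{-n\kappa_0^2 (z \wedge c_0)^2\}$. -/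
/-!
Hoeffding's argument. A U-statistic of order two is an average, over all permutations of the
sample, of means of `⌊n/2⌋` disjoint, hence independent, pairs; by Jensen its moment generating
function is dominated by that of a sum of `⌊n/2⌋` independent `[0, 1]`-valued variables. If the
kernel has mean at most `1/2 - a`, the Chernoff bound at the optimal parameter gives
`ℙ(U_n ≥ 1/2) ≤ (1 - 4a²)^(⌊n/2⌋/2)`, which is at most `exp(-n a²)` once `n a² > log 2`
(otherwise the claimed bound exceeds `1`).

With `m = z ⊓ c₀`, the derivative bound gives `U(θ - m) ≤ 1/2 - κ₀ m` and
`U(θ + m) ≥ 1/2 + κ₀ m`, while `|θ̂ - θ| > z` forces `U_n(θ - m) ≥ 1/2` or `U_n(θ + m) < 1/2`.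
-/

open Real Filter Topology Finset Fintype MeasureTheory ProbabilityTheory
open scoped Nat

lemma Real.add_sq_div_two_add_cube_div_three_le_neg_log_one_sub {x : ℝ} (h0 : 0 ≤ x) (h1 : x < 1) :
    x + x ^ 2 / 2 + x ^ 3 / 3 ≤ -log (1 - x) := by
  have h := sum_le_hasSum (Finset.range 3) (fun i _ => by positivity)
    (hasSum_pow_div_log_of_abs_lt_one (by rwa [abs_of_nonneg h0]))
  norm_num [Finset.sum_range_succ] at h
  linarith

lemma sqrt_one_sub_four_mul_sq_pow_le_exp {n : ℕ} (hn : 2 ≤ n) {a : ℝ}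
    (hlog : log 2 < n * a ^ 2) :
    √(1 - 4 * a ^ 2) ^ (n / 2) ≤ exp (-(n * a ^ 2)) := by
  rcases le_or_gt (1 - 4 * a ^ 2) 0 with hx | hx
  · rw [sqrt_eq_zero'.mpr hx, zero_pow (by omega)]
    positivity
  set x := 4 * a ^ 2
  have hx0 : 0 ≤ x := by positivity
  have hlog_series := add_sq_div_two_add_cube_div_three_le_neg_log_one_sub hx0 (by linarith)
  rw [← exp_log (pow_pos (sqrt_pos.mpr hx) _), exp_le_exp, log_pow, log_sqrt hx.le]
  -- `n ≤ 2 * (n / 2) + 1`; for odd `n` the missing term is paid for by `log 2 < n a²`.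
  have hkey : n * x ≤ 2 * (n / 2 : ℕ) * (x + x ^ 2 / 2 + x ^ 3 / 3) := by
    have hlog2 := Real.log_two_gt_d9
    obtain ⟨k, rfl | rfl⟩ := Nat.even_or_odd' n
    · push_cast [Nat.mul_div_cancel_left k two_pos]
      nlinarith [mul_nonneg (Nat.cast_nonneg (α := ℝ) k)
        (by positivity : (0:ℝ) ≤ x ^ 2 / 2 + x ^ 3 / 3)]
    · have hk : (2 * k + 1) / 2 = k := by omega
      have hk1 : (1 : ℝ) ≤ k := by exact_mod_cast (by omega : 1 ≤ k)
      rw [hk]; push_cast at hlog ⊢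
      nlinarith [mul_nonneg (by linarith : (0:ℝ) ≤ k - 1) hx0, mul_nonneg hx0 hx0,
        mul_nonneg (mul_nonneg hx0 hx0) (by linarith : (0:ℝ) ≤ k - 1)]
  nlinarith [mul_le_mul_of_nonneg_left hlog_series (Nat.cast_nonneg (α := ℝ) (n / 2))]

lemma le_sqrt_one_sub_four_mul_sq_pow {p q a : ℝ} {k : ℕ} (ha : 0 ≤ a) (hq0 : 0 ≤ q)
    (hqa : q ≤ 1 / 2 - a) (hp : ∀ s, 0 ≤ s → p ≤ (exp (-s / 2) * (1 + (exp s - 1) * q)) ^ k) :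
    p ≤ √(1 - 4 * a ^ 2) ^ k := by
  rcases (show a ≤ 1 / 2 by linarith).lt_or_eq with ha' | rfl
  · -- the optimal Chernoff parameter for `q = 1 / 2 - a`
    set s := log ((1 + 2 * a) / (1 - 2 * a))
    have hexp : exp s = (1 + 2 * a) / (1 - 2 * a) := exp_log (div_pos (by linarith) (by linarith))
    have hs : 0 ≤ s := log_nonneg ((one_le_div (by linarith)).mpr (by linarith))
    have hbase : exp (-s / 2) * (1 + 2 * a) = √(1 - 4 * a ^ 2) := by
      rw [← sqrt_sq (by positivity : 0 ≤ exp (-s / 2) * (1 + 2 * a)), mul_pow, ← exp_nat_mul,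
        show ((2 : ℕ) : ℝ) * (-s / 2) = -s by push_cast; ring, exp_neg, hexp]
      congr 1
      field_simp
      ring
    have hs1 : 0 ≤ exp s - 1 := sub_nonneg.mpr (one_le_exp hs)
    have hq : (exp s - 1) * q ≤ 2 * a := calc
      (exp s - 1) * q ≤ (exp s - 1) * (1 / 2 - a) := mul_le_mul_of_nonneg_left hqa hs1
      _ = 2 * a := by rw [hexp]; field_simp [(by linarith : 1 - 2 * a ≠ 0)]; ring
    refine (hp s hs).trans (pow_le_pow_left₀ (by positivity) ?_ k)
    rw [← hbase]
    gcongr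
  · obtain rfl : q = 0 := by linarith
    rcases k.eq_zero_or_pos with rfl | hk
    · simpa using hp 0 le_rfl
    have hlim : Tendsto (fun s => (exp (-s / 2) * (1 + (exp s - 1) * 0)) ^ k) atTop (𝓝 0) := by
      simpa [zero_pow hk.ne', neg_div] using
        ((tendsto_exp_neg_atTop_nhds_zero.comp (tendsto_id.atTop_div_const two_pos)).pow k)
    calc p ≤ 0 := ge_of_tendsto hlim (eventually_atTop.mpr ⟨0, hp⟩)
      _ ≤ _ := by positivity

lemma Equiv.Perm.exists_apply_eq_apply_eq {α : Type*} [DecidableEq α] {a b a' b' : α}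
    (hab : a ≠ b) (hab' : a' ≠ b') : ∃ ρ : Equiv.Perm α, ρ a = a' ∧ ρ b = b' := by
  refine ⟨Equiv.swap (Equiv.swap a a' b) b' * Equiv.swap a a', ?_, by simp⟩
  have : Equiv.swap a a' b ≠ a' := by
    rw [Ne, Equiv.swap_apply_eq_iff, Equiv.swap_apply_right]; exact hab.symm
  simp [Equiv.swap_apply_of_ne_of_ne this.symm hab']

lemma Equiv.Perm.sum_apply_apply_eq_of_ne {α M : Type*} [Fintype α] [DecidableEq α]
    [AddCommMonoid M] (g : α → α → M) {a b a' b' : α} (hab : a ≠ b) (hab' : a' ≠ b') :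
    ∑ σ : Equiv.Perm α, g (σ a') (σ b') = ∑ σ : Equiv.Perm α, g (σ a) (σ b) := by
  obtain ⟨ρ, rfl, rfl⟩ := exists_apply_eq_apply_eq hab hab'
  exact Fintype.sum_equiv (Equiv.mulRight ρ) _ _ fun σ => rfl

lemma Equiv.Perm.card_mul_pred_smul_sum_apply_apply {α M : Type*} [Fintype α] [DecidableEq α]
    [AddCommMonoid M] (g : α → α → M) {a b : α} (hab : a ≠ b) :
    (card α * (card α - 1)) • ∑ σ : Equiv.Perm α, g (σ a) (σ b) =
      (card α)! • ∑ i, ∑ j, if i ≠ j then g i j else 0 :=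
  calc (card α * (card α - 1)) • ∑ σ : Equiv.Perm α, g (σ a) (σ b)
      = ∑ a' : α, ∑ b' : α, if a' ≠ b' then ∑ σ : Equiv.Perm α, g (σ a) (σ b) else 0 := by
        simp [sum_ite, filter_ne, card_erase_of_mem, mul_smul]
    _ = ∑ a' : α, ∑ b' : α, ∑ σ : Equiv.Perm α, if σ a' ≠ σ b' then g (σ a') (σ b') else 0 := by
        refine sum_congr rfl fun a' _ => sum_congr rfl fun b' _ => ?_
        simp only [ne_eq, Equiv.apply_eq_iff_eq, ← ite_sum_zero]
        split_ifs with h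
        · rfl
        · exact (sum_apply_apply_eq_of_ne g hab h).symm
    _ = ∑ σ : Equiv.Perm α, ∑ a' : α, ∑ b' : α, if σ a' ≠ σ b' then g (σ a') (σ b') else 0 := by
        simp_rw [sum_comm (γ := Equiv.Perm α)]
    _ = (card α)! • ∑ i, ∑ j, if i ≠ j then g i j else 0 := by
        rw [← Fintype.card_perm, ← Finset.card_univ, ← sum_const]
        exact sum_congr rfl fun σ _ =>
          Fintype.sum_equiv σ _ _ fun _ => Fintype.sum_equiv σ _ _ fun _ => rfl

section UStatistic

variable {ι : Type*} [Fintype ι] [DecidableEq ι]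

noncomputable def uStat (h : ℝ → ℝ → ℝ) (x : ι → ℝ) : ℝ :=
  1 / ((card ι : ℝ) * ((card ι : ℝ) - 1)) * ∑ i, ∑ j, if i ≠ j then h (x i) (x j) else 0

lemma uStat_mono {h h' : ℝ → ℝ → ℝ} {x : ι → ℝ}
    (hle : ∀ i j, h (x i) (x j) ≤ h' (x i) (x j)) : uStat h x ≤ uStat h' x := by
  have hcard : 0 ≤ (card ι : ℝ) * ((card ι : ℝ) - 1) := by
    rcases (card ι).eq_zero_or_pos with h0 | hpos
    · simp [h0]
    · exact mul_nonneg (Nat.cast_nonneg _) (sub_nonneg.2 (Nat.one_le_cast.2 hpos))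
  unfold uStat
  gcongr with i _ j _
  split_ifs
  exacts [hle i j, le_rfl]

lemma uStat_const (hn : 2 ≤ card ι) (c : ℝ) (x : ι → ℝ) : uStat (fun _ _ => c) x = c := by
  have : ((card ι : ℝ) - 1) ≠ 0 := sub_ne_zero.2 (by norm_cast; omega)
  have : (card ι : ℝ) ≠ 0 := by norm_cast; omega
  simp [uStat, sum_ite, filter_ne, card_erase_of_mem, Nat.cast_sub (by omega : 1 ≤ card ι)]
  field_simp

lemma uStat_mem_Icc (hn : 2 ≤ card ι) {h : ℝ → ℝ → ℝ} (h01 : ∀ y z, h y z ∈ Set.Icc 0 1)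
    (x : ι → ℝ) : uStat h x ∈ Set.Icc 0 1 :=
  ⟨(uStat_const hn 0 x).symm.trans_le (uStat_mono fun _ _ => (h01 _ _).1),
    (uStat_mono fun _ _ => (h01 _ _).2).trans_eq (uStat_const hn 1 x)⟩

lemma uStat_one_sub (hn : 2 ≤ card ι) (h : ℝ → ℝ → ℝ) (x : ι → ℝ) :
    uStat (fun y z => 1 - h y z) x = 1 - uStat h x := by
  conv_rhs => rw [← uStat_const hn 1 x]
  simp only [uStat, ← mul_sub, ← sum_sub_distrib]
  congr 1
  refine sum_congr rfl fun i _ => sum_congr rfl fun j _ => ?_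
  split_ifs <;> simp

lemma measurable_uStat {Ω : Type*} [MeasurableSpace Ω] {h : ℝ → ℝ → ℝ} {X : ι → Ω → ℝ}
    (hh : Measurable (Function.uncurry h)) (hX : ∀ i, Measurable (X i)) :
    Measurable fun ω => uStat h (X · ω) := by
  refine (Finset.measurable_sum _ fun i _ => Finset.measurable_sum _ fun j _ => ?_).const_mul _
  split_ifs
  exacts [hh.comp ((hX i).prodMk (hX j)), measurable_const]

lemma uStat_eq_sum_perm (h : ℝ → ℝ → ℝ) (x : ι → ℝ) {k : ℕ} (hk : 0 < k)
    (e : Fin k × Fin 2 ↪ ι) :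
    uStat h x = ∑ σ : Equiv.Perm ι,
      ((card ι)! : ℝ)⁻¹ * ((k : ℝ)⁻¹ * ∑ r, h (x (σ (e (r, 0)))) (x (σ (e (r, 1))))) := by
  have hcard : 2 ≤ card ι := by
    have := Fintype.card_le_of_embedding e
    simp only [Fintype.card_prod, Fintype.card_fin] at this
    omega
  have hsum : ∀ r, ∑ σ : Equiv.Perm ι, h (x (σ (e (r, 0)))) (x (σ (e (r, 1)))) =
      (card ι)! * uStat h x := by
    intro r
    have := Equiv.Perm.card_mul_pred_smul_sum_apply_apply (fun i j => h (x i) (x j))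
      (e.injective.ne (by simp) : e (r, 0) ≠ e (r, 1))
    have hpos : (0 : ℝ) < card ι * (card ι - 1) := by
      have : (2 : ℝ) ≤ card ι := by exact_mod_cast hcard
      nlinarith
    rw [nsmul_eq_mul, nsmul_eq_mul, Nat.cast_mul, Nat.cast_sub (by omega), Nat.cast_one] at this
    rw [uStat, one_div, mul_left_comm, ← this, inv_mul_cancel_left₀ hpos.ne']
  simp_rw [← mul_sum]
  rw [sum_comm]
  simp_rw [hsum]
  simp only [sum_const, card_univ, Fintype.card_fin, nsmul_eq_mul]
  field_simp

end UStatistic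

lemma ProbabilityTheory.iIndepFun.curry {Ω ι κ 𝓧 : Type*} [MeasurableSpace Ω]
    [MeasurableSpace 𝓧] {P : Measure Ω} [IsProbabilityMeasure P] {X : ι → κ → Ω → 𝓧}
    (hX : ∀ i j, Measurable (X i j)) (h : iIndepFun (fun p : ι × κ => X p.1 p.2) P) :
    iIndepFun (fun i ω j => X i j ω) P := by
  have hσ : iIndepFun (fun p : (_ : ι) × κ => X p.1 p.2) P :=
    h.precomp (Equiv.sigmaEquivProd ι κ).injective
  have hrow (i : ι) : P.map (fun ω j => X i j ω) = Measure.infinitePi (fun j => P.map (X i j)) :=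
    (iIndepFun_iff_map_fun_eq_infinitePi_map (hX i)).1
      (h.precomp (g := Prod.mk i) (Prod.mk_right_injective i))
  rw [iIndepFun_iff_map_fun_eq_infinitePi_map (fun i => by fun_prop)]
  have : (fun ω i j => X i j ω) =
      MeasurableEquiv.piCurry (fun _ _ => 𝓧) ∘ fun ω (p : (_ : ι) × κ) => X p.1 p.2 ω := rfl
  have hmap := (iIndepFun_iff_map_fun_eq_infinitePi_map (fun p : (_ : ι) × κ => hX p.1 p.2)).1 hσ
  rw [this, ← Measure.map_map (by fun_prop) (by fun_prop), hmap]
  simp_rw [hrow]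
  have (i : ι) (j : κ) := Measure.isProbabilityMeasure_map (μ := P) (hX i j).aemeasurable
  exact Measure.infinitePi_map_piCurry (fun i j => P.map (X i j))

section Probability
variable {Ω : Type*} [MeasurableSpace Ω] {P : Measure Ω} [IsProbabilityMeasure P]

lemma ProbabilityTheory.identDistrib_prodMk_of_iIndepFun {ι 𝓧 : Type*} [MeasurableSpace 𝓧]
    {X : ι → Ω → 𝓧} (hX : ∀ i, Measurable (X i)) (hindep : iIndepFun X P)
    (hident : ∀ i j, IdentDistrib (X i) (X j) P P) {i j i' j' : ι} (hij : i ≠ j) (hij' : i' ≠ j') :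
    IdentDistrib (fun ω => (X i ω, X j ω)) (fun ω => (X i' ω, X j' ω)) P P where
  aemeasurable_fst := ((hX i).prodMk (hX j)).aemeasurable
  aemeasurable_snd := ((hX i').prodMk (hX j')).aemeasurable
  map_eq := by
    rw [(indepFun_iff_map_prod_eq_prod_map_map (hX i).aemeasurable (hX j).aemeasurable).1
        (hindep.indepFun hij),
      (indepFun_iff_map_prod_eq_prod_map_map (hX i').aemeasurable (hX j').aemeasurable).1
        (hindep.indepFun hij'), (hident i i').map_eq, (hident j j').map_eq]

lemma ProbabilityTheory.mgf_le_one_add_mul_integral {Z : Ω → ℝ} (hZ : Measurable Z)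
    (h01 : ∀ ω, Z ω ∈ Set.Icc 0 1) (s : ℝ) :
    mgf Z P s ≤ 1 + (exp s - 1) * P[Z] := by
  have hZi : Integrable Z P := .of_mem_Icc 0 1 hZ.aemeasurable (.of_forall h01)
  have hconv (ω : Ω) : exp (s * Z ω) ≤ 1 + (exp s - 1) * Z ω := by
    have := convexOn_exp.2 (Set.mem_univ 0) (Set.mem_univ s) (sub_nonneg.2 (h01 ω).2) (h01 ω).1
      (sub_add_cancel 1 (Z ω))
    simp only [smul_eq_mul, mul_zero, zero_add, exp_zero] at this
    rw [mul_comm]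
    linarith
  calc mgf Z P s ≤ ∫ ω, (1 + (exp s - 1) * Z ω) ∂P :=
        integral_mono_of_nonneg (.of_forall fun ω => (exp_pos _).le)
          ((integrable_const 1).add (hZi.const_mul _)) (.of_forall hconv)
    _ = 1 + (exp s - 1) * P[Z] := by
        rw [integral_add (integrable_const 1) (hZi.const_mul _), integral_const_mul]; simp

variable {ι : Type*} {X : ι → Ω → ℝ} {h : ℝ → ℝ → ℝ}

lemma mgf_sum_pairs_le (hX : ∀ i, Measurable (X i)) (hindep : iIndepFun X P)
    (hh : Measurable (Function.uncurry h)) (h01 : ∀ x y, h x y ∈ Set.Icc 0 1) {q : ℝ}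
    (hq : ∀ i j, i ≠ j → ∫ ω, h (X i ω) (X j ω) ∂P = q) {k : ℕ} {c : Fin k × Fin 2 → ι}
    (hc : Function.Injective c) (s : ℝ) :
    mgf (fun ω => ∑ r, h (X (c (r, 0)) ω) (X (c (r, 1)) ω)) P s ≤ (1 + (exp s - 1) * q) ^ k := by
  set Z : Fin k → Ω → ℝ := fun r ω => h (X (c (r, 0)) ω) (X (c (r, 1)) ω)
  have hZ (r : Fin k) : Measurable (Z r) := hh.comp ((hX _).prodMk (hX _))
  have hZindep : iIndepFun Z P :=
    ((hindep.precomp hc).curry (fun r b => hX (c (r, b)))).comp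
      (fun _ v => h (v 0) (v 1))
      fun _ => hh.comp (f := fun v : Fin 2 → ℝ => (v 0, v 1)) (by fun_prop)
  have hsum : (fun ω => ∑ r, Z r ω) = ∑ r, Z r := by ext; simp
  rw [hsum, hZindep.mgf_sum hZ]
  refine (prod_le_prod (fun r _ => mgf_nonneg) fun r _ => ?_).trans_eq (Fin.prod_const k _)
  calc mgf (Z r) P s ≤ 1 + (exp s - 1) * P[Z r] :=
        mgf_le_one_add_mul_integral (hZ r) (fun _ => h01 _ _) s
    _ = 1 + (exp s - 1) * q := by rw [hq _ _ (hc.ne (by simp))]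

lemma mgf_uStat_le [Fintype ι] [DecidableEq ι] (hX : ∀ i, Measurable (X i))
    (hindep : iIndepFun X P) (hh : Measurable (Function.uncurry h))
    (h01 : ∀ x y, h x y ∈ Set.Icc 0 1) {q : ℝ}
    (hq : ∀ i j, i ≠ j → ∫ ω, h (X i ω) (X j ω) ∂P = q) {k : ℕ} (hk : 0 < k)
    (e : Fin k × Fin 2 ↪ ι) (s : ℝ) :
    mgf (fun ω => uStat h (X · ω)) P (k * s) ≤ (1 + (exp s - 1) * q) ^ k := by
  set S : Equiv.Perm ι → Ω → ℝ := fun σ ω => ∑ r, h (X (σ (e (r, 0))) ω) (X (σ (e (r, 1))) ω)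
  have hS (σ : Equiv.Perm ι) : Integrable (fun ω => exp (s * S σ ω)) P := by
    refine integrable_exp_mul_of_mem_Icc (a := 0) (b := k) ?_ (.of_forall fun ω =>
      ⟨sum_nonneg fun r _ => (h01 _ _).1, (sum_le_sum fun r _ => (h01 _ _).2).trans (by simp)⟩)
    exact (Finset.measurable_sum _ fun r _ => hh.comp ((hX _).prodMk (hX _))).aemeasurable
  have hjensen (ω : Ω) : exp (k * s * uStat h (X · ω)) ≤
      ∑ σ : Equiv.Perm ι, ((card ι)! : ℝ)⁻¹ * exp (s * S σ ω) := by
    have hw : ∑ _σ : Equiv.Perm ι, ((card ι)! : ℝ)⁻¹ = 1 := by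
      simp [Fintype.card_perm, (Nat.factorial_pos _).ne']
    calc exp (k * s * uStat h (X · ω))
        = exp (∑ σ : Equiv.Perm ι, ((card ι)! : ℝ)⁻¹ • (s * S σ ω)) := by
          rw [uStat_eq_sum_perm h _ hk e, mul_sum]
          congr 1
          refine sum_congr rfl fun σ _ => ?_
          simp only [smul_eq_mul, S]
          field_simp
      _ ≤ _ := convexOn_exp.map_sum_le (fun _ _ => by positivity) hw (fun _ _ => Set.mem_univ _)
  calc mgf (fun ω => uStat h (X · ω)) P (k * s)
      ≤ ∫ ω, ∑ σ : Equiv.Perm ι, ((card ι)! : ℝ)⁻¹ * exp (s * S σ ω) ∂P :=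
        integral_mono_of_nonneg (.of_forall fun ω => (exp_pos _).le)
          (integrable_finsetSum _ fun σ _ => (hS σ).const_mul _) (.of_forall hjensen)
    _ = ∑ σ : Equiv.Perm ι, ((card ι)! : ℝ)⁻¹ * mgf (S σ) P s := by
        rw [integral_finsetSum _ fun σ _ => (hS σ).const_mul _]
        simp_rw [integral_const_mul, mgf]
    _ ≤ ∑ _σ : Equiv.Perm ι, ((card ι)! : ℝ)⁻¹ * (1 + (exp s - 1) * q) ^ k := by
        gcongr with σ
        exact mgf_sum_pairs_le hX hindep hh h01 hq (σ.injective.comp e.injective) s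
    _ = (1 + (exp s - 1) * q) ^ k := by
        simp [Fintype.card_perm, (Nat.factorial_pos _).ne']

lemma measureReal_uStat_ge_half_le [Fintype ι] [DecidableEq ι] (hn : 2 ≤ card ι)
    (hX : ∀ i, Measurable (X i)) (hindep : iIndepFun X P) (hh : Measurable (Function.uncurry h))
    (h01 : ∀ x y, h x y ∈ Set.Icc 0 1) {q a : ℝ}
    (hq : ∀ i j, i ≠ j → ∫ ω, h (X i ω) (X j ω) ∂P = q) (ha : 0 ≤ a) (hqa : q ≤ 1 / 2 - a)
    (hlog : log 2 < card ι * a ^ 2) :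
    P.real {ω | 1 / 2 ≤ uStat h (X · ω)} ≤ exp (-(card ι * a ^ 2)) := by
  set k := card ι / 2
  have hk : 0 < k := by omega
  let e : Fin k × Fin 2 ↪ ι := (finProdFinEquiv.toEmbedding.trans
    (Fin.castLEEmb (Nat.div_mul_le_self _ 2))).trans (equivFin ι).symm.toEmbedding
  have hq0 : 0 ≤ q := by
    rw [← hq (e (⟨0, hk⟩, 0)) (e (⟨0, hk⟩, 1)) (e.injective.ne (by simp))]
    exact integral_nonneg fun ω => (h01 _ _).1
  refine (le_sqrt_one_sub_four_mul_sq_pow ha hq0 hqa fun s hs => ?_).trans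
    (sqrt_one_sub_four_mul_sq_pow_le_exp hn hlog)
  have hint : Integrable (fun ω => exp (k * s * uStat h (X · ω))) P :=
    integrable_exp_mul_of_mem_Icc (measurable_uStat hh hX).aemeasurable
      (.of_forall fun ω => uStat_mem_Icc hn h01 _)
  calc P.real {ω | 1 / 2 ≤ uStat h (X · ω)}
      ≤ exp (-(k * s) * (1 / 2)) * mgf (fun ω => uStat h (X · ω)) P (k * s) :=
        measure_ge_le_exp_mul_mgf (1 / 2) (by positivity) hint
    _ ≤ exp (-(k * s) * (1 / 2)) * (1 + (exp s - 1) * q) ^ k := by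
        gcongr
        exact mgf_uStat_le hX hindep hh h01 hq hk e s
    _ = (exp (-s / 2) * (1 + (exp s - 1) * q)) ^ k := by
        rw [mul_pow, ← exp_nat_mul]
        ring_nf

end Probability

section SuperlevelSets

variable {F : ℝ → ℝ} {c : ℝ}

lemma nonempty_and_bddBelow_setOf_le (htop : ∀ᶠ t in atTop, c ≤ F t)
    (hbot : ∀ᶠ t in atBot, F t < c) :
    {t | c ≤ F t}.Nonempty ∧ BddBelow {t | c ≤ F t} := by
  obtain ⟨t₀, ht₀⟩ := eventually_atBot.1 hbot
  exact ⟨htop.exists, t₀, fun u hu => le_of_not_gt fun hlt => (ht₀ u hlt.le).not_ge hu⟩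

lemma Monotone.le_of_sInf_setOf_le_lt (hF : Monotone F) (hne : {t | c ≤ F t}.Nonempty) {t : ℝ}
    (ht : sInf {t | c ≤ F t} < t) : c ≤ F t := by
  obtain ⟨u, hu, hut⟩ := exists_lt_of_csInf_lt hne ht
  exact hu.trans (hF hut.le)

lemma Monotone.apply_sInf_setOf_le_eq (hF : Monotone F) (hne : {t | c ≤ F t}.Nonempty)
    (hbdd : BddBelow {t | c ≤ F t}) (hcont : ContinuousAt F (sInf {t | c ≤ F t})) :
    F (sInf {t | c ≤ F t}) = c := by
  set θ := sInf {t | c ≤ F t}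
  refine le_antisymm ?_ ?_
  · refine _root_.le_of_tendsto (hcont.tendsto.mono_left (nhdsWithin_le_nhds (s := Set.Iio θ)))
      (eventually_nhdsWithin_of_forall fun t ht => ?_)
    exact (not_le.1 (notMem_of_lt_csInf (s := {t | c ≤ F t}) ht hbdd)).le
  · exact _root_.ge_of_tendsto (hcont.tendsto.mono_left (nhdsWithin_le_nhds (s := Set.Ioi θ)))
      (eventually_nhdsWithin_of_forall fun t ht => hF.le_of_sInf_setOf_le_lt hne ht)

end SuperlevelSets

lemma mul_sub_le_sub_of_hasDerivAt {f f' : ℝ → ℝ} {a b κ : ℝ} (hab : a ≤ b)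
    (hf : ∀ x ∈ Set.Icc a b, HasDerivAt f (f' x) x) (hκ : ∀ x ∈ Set.Icc a b, κ ≤ f' x) :
    κ * (b - a) ≤ f b - f a := by
  have hint : ∀ x ∈ interior (Set.Icc a b), x ∈ Set.Icc a b := fun x hx => interior_subset hx
  refine (convex_Icc a b).mul_sub_le_image_sub_of_le_deriv
    (fun x hx => (hf x hx).continuousAt.continuousWithinAt)
    (fun x hx => (hf x (hint x hx)).differentiableAt.differentiableWithinAt)
    (fun x hx => (hf x (hint x hx)).deriv ▸ hκ x (hint x hx)) a ⟨le_rfl, hab⟩ b ⟨hab, le_rfl⟩ hab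

lemma cdf_sub_le_and_le_cdf_add (μ : Measure ℝ) [IsProbabilityMeasure μ] {θ c κ m : ℝ}
    {F' : ℝ → ℝ} (hθ : θ = sInf {t | cdf μ t ≥ 1 / 2})
    (hderiv : ∀ δ, |δ| ≤ c → HasDerivAt (cdf μ) (F' (θ + δ)) (θ + δ))
    (hlb : ∀ δ, |δ| ≤ c → κ ≤ F' (θ + δ)) (hm0 : 0 ≤ m) (hmc : m ≤ c) :
    cdf μ (θ - m) ≤ 1 / 2 - κ * m ∧ 1 / 2 + κ * m ≤ cdf μ (θ + m) := by
  have hx (x : ℝ) (hx : x ∈ Set.Icc (θ - c) (θ + c)) : HasDerivAt (cdf μ) (F' x) x ∧ κ ≤ F' x := by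
    have hδ : |x - θ| ≤ c := abs_sub_le_iff.2 ⟨by linarith [hx.2], by linarith [hx.1]⟩
    simpa using And.intro (hderiv _ hδ) (hlb _ hδ)
  obtain ⟨hne, hbdd⟩ := nonempty_and_bddBelow_setOf_le (F := cdf μ) (c := 1 / 2)
    ((tendsto_cdf_atTop μ).eventually (eventually_ge_nhds (by norm_num)))
    ((tendsto_cdf_atBot μ).eventually (eventually_lt_nhds (by norm_num)))
  have hθc : cdf μ θ = 1 / 2 := by
    subst hθ
    exact (monotone_cdf μ).apply_sInf_setOf_le_eq hne hbdd
      (hx _ ⟨by linarith, by linarith⟩).1.continuousAt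
  have hmvt {x y : ℝ} (hx' : θ - c ≤ x) (hy' : y ≤ θ + c) (hxy : x ≤ y) :
      κ * (y - x) ≤ cdf μ y - cdf μ x :=
    mul_sub_le_sub_of_hasDerivAt hxy (fun t ht => (hx t ⟨by linarith [ht.1], by linarith [ht.2]⟩).1)
      (fun t ht => (hx t ⟨by linarith [ht.1], by linarith [ht.2]⟩).2)
  constructor
  · linarith [hmvt (x := θ - m) (y := θ) (by linarith) (by linarith) (by linarith)]
  · linarith [hmvt (x := θ) (y := θ + m) (by linarith) (by linarith) (by linarith)]

noncomputable def walshIndicator (t x y : ℝ) : ℝ := if (x + y) / 2 ≤ t then 1 else 0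

lemma measurable_walshIndicator (t : ℝ) : Measurable (Function.uncurry (walshIndicator t)) :=
  Measurable.ite (measurableSet_le (by fun_prop) measurable_const) measurable_const
    measurable_const

lemma walshIndicator_mem_Icc (t x y : ℝ) : walshIndicator t x y ∈ Set.Icc 0 1 := by
  unfold walshIndicator; split_ifs <;> norm_num

lemma integral_walshIndicator_eq {Ω ι : Type*} [MeasurableSpace Ω] {P : Measure Ω}
    [IsProbabilityMeasure P] {X : ι → Ω → ℝ} (hX : ∀ i, Measurable (X i))
    (hindep : iIndepFun X P) (hident : ∀ i j, IdentDistrib (X i) (X j) P P)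
    {i j i' j' : ι} (hij : i ≠ j) (hij' : i' ≠ j') (t : ℝ) :
    ∫ ω, walshIndicator t (X i ω) (X j ω) ∂P = P.real {ω | (X i' ω + X j' ω) / 2 ≤ t} := by
  refine ((identDistrib_prodMk_of_iIndepFun hX hindep hident hij hij').comp
    (measurable_walshIndicator t)).integral_eq.trans ?_
  rw [← integral_indicator_one (measurableSet_le (by fun_prop) measurable_const)]
  congr 1 with ω

section HodgesLehmann

variable {ι : Type*} [Fintype ι] [DecidableEq ι]

noncomputable def hodgesLehmann (x : ι → ℝ) : ℝ := sInf {t | uStat (walshIndicator t) x ≥ 1 / 2}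

lemma le_uStat_or_le_uStat_of_lt_abs_hodgesLehmann_sub (hn : 2 ≤ card ι) (x : ι → ℝ)
    {θ m : ℝ} (h : m < |hodgesLehmann x - θ|) :
    1 / 2 ≤ uStat (fun y z => 1 - walshIndicator (θ + m) y z) x ∨
      1 / 2 ≤ uStat (walshIndicator (θ - m)) x := by
  set F := fun t => uStat (walshIndicator t) x
  have hF : Monotone F := fun t t' htt' => uStat_mono fun i j => by
    unfold walshIndicator; split_ifs with h₁ h₂ <;> norm_num; exact h₂ (h₁.trans htt')
  have htop : ∀ᶠ t in atTop, 1 / 2 ≤ F t :=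
    (eventually_all.2 fun i => eventually_ge_atTop (x i)).mono fun t ht => calc
      (1 : ℝ) / 2 ≤ uStat (fun _ _ => 1) x := by rw [uStat_const hn]; norm_num
      _ ≤ F t := uStat_mono fun i j => by
        simp [walshIndicator, show (x i + x j) / 2 ≤ t by linarith [ht i, ht j]]
  have hbot : ∀ᶠ t in atBot, F t < 1 / 2 :=
    (eventually_all.2 fun i => eventually_lt_atBot (x i)).mono fun t ht => calc
      F t ≤ uStat (fun _ _ => 0) x := uStat_mono fun i j => by
        simp [walshIndicator, show ¬(x i + x j) / 2 ≤ t by linarith [ht i, ht j]]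
      _ < 1 / 2 := by rw [uStat_const hn]; norm_num
  obtain ⟨hne, hbdd⟩ := nonempty_and_bddBelow_setOf_le htop hbot
  change m < |sInf {t | 1 / 2 ≤ F t} - θ| at h
  rcases lt_abs.1 h with h | h
  · have : F (θ + m) < 1 / 2 :=
      not_le.1 (notMem_of_lt_csInf (s := {t | 1 / 2 ≤ F t}) (by linarith) hbdd)
    left
    rw [uStat_one_sub hn]
    linarith
  · exact .inr (hF.le_of_sInf_setOf_le_lt hne (by linarith))

lemma measureReal_lt_abs_hodgesLehmann_sub_le {Ω : Type*} [MeasurableSpace Ω] {P : Measure Ω}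
    [IsProbabilityMeasure P] (hn : 2 ≤ card ι) {X : ι → Ω → ℝ} (hX : ∀ i, Measurable (X i))
    (hindep : iIndepFun X P) (hident : ∀ i j, IdentDistrib (X i) (X j) P P) {i₀ j₀ : ι}
    (h₀ : i₀ ≠ j₀) {θ m a : ℝ}
    (hdn : P.real {ω | (X i₀ ω + X j₀ ω) / 2 ≤ θ - m} ≤ 1 / 2 - a)
    (hup : 1 / 2 + a ≤ P.real {ω | (X i₀ ω + X j₀ ω) / 2 ≤ θ + m}) (ha : 0 ≤ a)
    (hlog : log 2 < card ι * a ^ 2) :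
    P.real {ω | m < |hodgesLehmann (X · ω) - θ|} ≤ 2 * exp (-(card ι * a ^ 2)) := by
  have hq (t : ℝ) (i j : ι) (hij : i ≠ j) : ∫ ω, walshIndicator t (X i ω) (X j ω) ∂P =
      P.real {ω | (X i₀ ω + X j₀ ω) / 2 ≤ t} :=
    integral_walshIndicator_eq hX hindep hident hij h₀ t
  have hqup (i j : ι) (hij : i ≠ j) : ∫ ω, 1 - walshIndicator (θ + m) (X i ω) (X j ω) ∂P =
      1 - P.real {ω | (X i₀ ω + X j₀ ω) / 2 ≤ θ + m} := by
    have hint : Integrable (fun ω => walshIndicator (θ + m) (X i ω) (X j ω)) P :=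
      .of_mem_Icc 0 1 ((measurable_walshIndicator _).comp ((hX i).prodMk (hX j))).aemeasurable
        (.of_forall fun _ => walshIndicator_mem_Icc _ _ _)
    rw [integral_sub (integrable_const 1) hint, hq _ _ _ hij]
    simp
  have hup_meas : Measurable (Function.uncurry fun y z => 1 - walshIndicator (θ + m) y z) :=
    (measurable_walshIndicator _).const_sub 1
  have hup01 (y z : ℝ) : 1 - walshIndicator (θ + m) y z ∈ Set.Icc 0 1 :=
    ⟨sub_nonneg.2 (walshIndicator_mem_Icc _ _ _).2, sub_le_self _ (walshIndicator_mem_Icc _ _ _).1⟩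
  calc P.real {ω | m < |hodgesLehmann (X · ω) - θ|}
      ≤ P.real {ω | 1 / 2 ≤ uStat (fun y z => 1 - walshIndicator (θ + m) y z) (X · ω)} +
          P.real {ω | 1 / 2 ≤ uStat (walshIndicator (θ - m)) (X · ω)} :=
        (measureReal_mono fun ω hω =>
          le_uStat_or_le_uStat_of_lt_abs_hodgesLehmann_sub hn _ hω).trans
          (measureReal_union_le _ _)
    _ ≤ exp (-(card ι * a ^ 2)) + exp (-(card ι * a ^ 2)) := by
        gcongr
        · exact measureReal_uStat_ge_half_le hn hX hindep hup_meas hup01 hqup ha (by linarith) hlog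
        · exact measureReal_uStat_ge_half_le hn hX hindep (measurable_walshIndicator _)
            (walshIndicator_mem_Icc _) (hq _) ha (by linarith) hlog
    _ = 2 * exp (-(card ι * a ^ 2)) := by ring

end HodgesLehmann

/-- Sub-Gaussian deviation bound for the one-sample Hodges–Lehmann estimator. -/
theorem stmt2
    {Ω : Type*} [MeasureSpace Ω] [IsProbabilityMeasure (ℙ : Measure Ω)]
    {n : ℕ} (hn : 2 ≤ n) (X : Fin n → Ω → ℝ)
    (hmeas : ∀ i, Measurable (X i))
    (hindep : iIndepFun X ℙ)
    (hident : ∀ i j, IdentDistrib (X i) (X j) ℙ ℙ)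
    (U : ℝ → ℝ)
    (hU : ∀ t, U t = (ℙ {ω | (X ⟨0, by omega⟩ ω + X ⟨1, by omega⟩ ω) / 2 ≤ t}).toReal)
    (θ : ℝ) (hθ : θ = sInf {t : ℝ | U t ≥ 1/2})
    (c₀ κ₀ : ℝ) (hc₀ : 0 < c₀) (hκ₀ : 0 < κ₀)
    (U' : ℝ → ℝ)
    (hderiv : ∀ δ : ℝ, |δ| ≤ c₀ → HasDerivAt U (U' (θ + δ)) (θ + δ))
    (hlb : ∀ δ : ℝ, |δ| ≤ c₀ → κ₀ ≤ U' (θ + δ))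
    (Un : Ω → ℝ → ℝ)
    (hUn : ∀ ω t, Un ω t = (1 / ((n : ℝ) * ((n : ℝ) - 1))) *
      ∑ i : Fin n, ∑ j : Fin n,
        if i ≠ j then (if (X i ω + X j ω) / 2 ≤ t then (1 : ℝ) else 0) else 0)
    (θhat : Ω → ℝ) (hθhat : ∀ ω, θhat ω = sInf {t : ℝ | Un ω t ≥ 1/2})
    (z : ℝ) (hz : 0 < z) :
    (ℙ {ω | |θhat ω - θ| > z}).toReal ≤
      2 * Real.exp (-(n : ℝ) * κ₀ ^ 2 * (min z c₀) ^ 2) := by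
  set m := min z c₀
  have hm : 0 < m := lt_min hz hc₀
  rw [← measureReal_def, show -(n : ℝ) * κ₀ ^ 2 * m ^ 2 = -(n * (κ₀ * m) ^ 2) by ring]
  rcases le_or_gt (n * (κ₀ * m) ^ 2) (log 2) with hsmall | hlog
  · calc (ℙ : Measure Ω).real _ ≤ 2 * exp (-log 2) := by
          rw [exp_neg, exp_log two_pos]; norm_num [measureReal_le_one]
      _ ≤ _ := by gcongr
  set Y := fun ω => (X ⟨0, by omega⟩ ω + X ⟨1, by omega⟩ ω) / 2
  have := Measure.isProbabilityMeasure_map (μ := (ℙ : Measure Ω)) (f := Y) (by fun_prop)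
  have hcdf : U = cdf ((ℙ : Measure Ω).map Y) := by
    ext t
    rw [hU, cdf_eq_real, map_measureReal_apply (by fun_prop) measurableSet_Iic, measureReal_def]
    rfl
  subst hcdf
  obtain ⟨hdn, hup⟩ := cdf_sub_le_and_le_cdf_add _ hθ hderiv hlb hm.le (min_le_right _ _)
  rw [hU, ← measureReal_def] at hdn hup
  have hθhat' (ω : Ω) : θhat ω = hodgesLehmann (X · ω) := by
    simp [hθhat, hUn, hodgesLehmann, uStat, walshIndicator]
  have hdev := measureReal_lt_abs_hodgesLehmann_sub_le (by simpa using hn) hmeas hindep hident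
    (by simp [Fin.ext_iff]) hdn hup (by positivity) (by simpa using hlog)
  rw [Fintype.card_fin] at hdev
  refine (measureReal_mono fun ω (hω : z < |θhat ω - θ|) => ?_).trans hdev
  exact (min_le_left _ _).trans_lt (hθhat' ω ▸ hω)
end

section
/- Under the setting of the one-sample Hodges–Lehmann estimator, for any $z \ge 0$, the event $\{\hat\theta > \theta + z\}$ implies $\{U(\theta+z) - U_n(\theta+z) > \kappa_0(z \wedge c_0)\}$, where $U(\theta) = 1/2$ and $U'(\theta+\delta) \ge \kappa_0$ for $|\delta| \le c_0$. -/
open MeasureTheory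

/-- Key deterministic step: if the HL estimator exceeds `θ + z`, then the
U-process deviates from the population CDF by more than `κ₀ (z ∧ c₀)`. -/
theorem stmt3
    (U Un : ℝ → ℝ) (θ c₀ κ₀ z : ℝ) (hz : 0 ≤ z) (hc₀ : 0 < c₀) (hκ₀ : 0 < κ₀)
    (hmono : Monotone U)
    (hUθ : U θ = 1/2)
    (U' : ℝ → ℝ)
    (hderiv : ∀ δ : ℝ, |δ| ≤ c₀ → HasDerivAt U (U' (θ + δ)) (θ + δ))
    (hlb : ∀ δ : ℝ, |δ| ≤ c₀ → κ₀ ≤ U' (θ + δ))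
    (hbdd : BddBelow {t : ℝ | Un t ≥ 1/2}) :
    sInf {t : ℝ | Un t ≥ 1/2} > θ + z →
      U (θ + z) - Un (θ + z) > κ₀ * min z c₀ := by
  intro hgt
  -- Un (θ + z) < 1/2
  have hUn : Un (θ + z) < 1/2 := by
    by_contra h
    push_neg at h
    have : sInf {t : ℝ | Un t ≥ 1/2} ≤ θ + z := csInf_le hbdd h
    linarith
  set z' := min z c₀ with hz'
  have hz'0 : 0 ≤ z' := le_min hz hc₀.le
  have hz'c : z' ≤ c₀ := min_le_right _ _
  -- derivative facts on D := Icc θ (θ + c₀)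
  have hD : ∀ x ∈ Set.Icc θ (θ + c₀), HasDerivAt U (U' x) x := by
    intro x hx
    have habs : |x - θ| ≤ c₀ := by
      rw [abs_le]; constructor <;> [linarith [hx.1, hc₀.le]; linarith [hx.2]]
    have := hderiv (x - θ) habs
    simpa using this
  have hcont : ContinuousOn U (Set.Icc θ (θ + c₀)) := fun x hx =>
    (hD x hx).continuousAt.continuousWithinAt
  have hdiff : DifferentiableOn ℝ U (interior (Set.Icc θ (θ + c₀))) := fun x hx =>
    ((hD x (interior_subset hx)).differentiableAt).differentiableWithinAt
  have hge : ∀ x ∈ interior (Set.Icc θ (θ + c₀)), κ₀ ≤ deriv U x := by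
    intro x hx
    have hx' := interior_subset hx
    rw [(hD x hx').deriv]
    have habs : |x - θ| ≤ c₀ := by
      rw [abs_le]; constructor <;> [linarith [hx'.1, hc₀.le]; linarith [hx'.2]]
    simpa using hlb (x - θ) habs
  have hmvt := (convex_Icc θ (θ + c₀)).mul_sub_le_image_sub_of_le_deriv hcont hdiff hge
    θ (by constructor <;> linarith) (θ + z')
    (by constructor <;> linarith) (by linarith)
  -- κ₀ * z' ≤ U (θ + z') - U θ
  have h1 : κ₀ * z' ≤ U (θ + z') - U θ := by simpa using hmvt
  have h2 : U (θ + z') ≤ U (θ + z) := hmono (by simp [hz', min_le_left])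
  rw [hUθ] at h1
  linarith
end

section
/- Let $W : \mathbb{R} \to \mathbb{R}$ be of the form $W(t) = U_n(\theta+t) - U(\theta+t)$ where $U_n$ is nondecreasing and $U$ is nondecreasing and Lipschitz with constant $\|U'\|_\infty$. Then for any $\Lambda > 0$ and integer $K \ge 1$, $\sup_{0 < t \le \Lambda}|W(t) - W(0)| \le \max_{h \in [2^K]}|W(\Lambda h/2^K) - W(0)| + \Lambda\|U'\|_\infty/2^K$. -/
open MeasureTheory

/-- Deterministic chaining/discretization lemma: the oscillation of
`W(t) = Uₙ(θ+t) - U(θ+t)` over `(0, Λ]` is controlled by its values on a dyadic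
grid plus the Lipschitz modulus of `U` over one mesh cell. -/
theorem stmt14
    (Un U : ℝ → ℝ) (θ : ℝ) (hUn : Monotone Un) (hUm : Monotone U)
    (L : NNReal) (hL : LipschitzWith L U)
    (W : ℝ → ℝ) (hW : ∀ t, W t = Un (θ + t) - U (θ + t))
    (Λ : ℝ) (hΛ : 0 < Λ) (K : ℕ) (hK : 1 ≤ K) :
    ∀ t : ℝ, 0 < t → t ≤ Λ →
      |W t - W 0| ≤
        (Finset.Icc 1 (2 ^ K)).sup'
          (Finset.nonempty_Icc.mpr (Nat.one_le_pow K 2 (by norm_num)))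
          (fun h => |W (Λ * (h : ℝ) / 2 ^ K) - W 0|) + Λ * (L : ℝ) / 2 ^ K := by
  intro t ht htΛ
  set M := (Finset.Icc 1 (2 ^ K)).sup'
      (Finset.nonempty_Icc.mpr (Nat.one_le_pow K 2 (by norm_num)))
      (fun h => |W (Λ * (h : ℝ) / 2 ^ K) - W 0|) with hM
  set a : ℝ := Λ / 2 ^ K with ha
  have hpow : (0:ℝ) < 2 ^ K := by positivity
  have ha0 : 0 < a := div_pos hΛ hpow
  set h : ℕ := ⌈t / a⌉₊ with hh
  have h1 : 1 ≤ h := Nat.one_le_iff_ne_zero.mpr (by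
    have : 0 < h := Nat.ceil_pos.mpr (div_pos ht ha0)
    omega)
  have h2 : h ≤ 2 ^ K := by
    apply Nat.ceil_le.mpr
    rw [div_le_iff₀ ha0]
    have : (2:ℝ) ^ K * a = Λ := by rw [ha]; field_simp
    push_cast
    rw [this]
    exact htΛ
  have hgrid : ∀ n : ℕ, Λ * (n : ℝ) / 2 ^ K = n * a := by
    intro n; rw [ha]; ring
  have hta : t ≤ h * a := by
    have := Nat.le_ceil (t / a)
    calc t = (t / a) * a := by field_simp
    _ ≤ h * a := by exact mul_le_mul_of_nonneg_right this ha0.le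
  have htb : ((h:ℝ) - 1) * a < t := by
    have hlt : ((h - 1 : ℕ) : ℝ) < t / a := by
      exact Nat.lt_ceil.mp (by omega)
    have : ((h - 1 : ℕ) : ℝ) = (h:ℝ) - 1 := by
      push_cast [h1]; ring
    rw [this] at hlt
    calc ((h:ℝ) - 1) * a < (t / a) * a := mul_lt_mul_of_pos_right hlt ha0
    _ = t := by field_simp
  -- Lipschitz estimates
  have hLip : ∀ x y : ℝ, |U x - U y| ≤ (L:ℝ) * |x - y| := by
    intro x y
    have := hL.dist_le_mul x y
    rwa [Real.dist_eq, Real.dist_eq] at this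
  have hMnonneg : 0 ≤ M := by
    have h1m : (1:ℕ) ∈ Finset.Icc 1 (2 ^ K) :=
      Finset.mem_Icc.mpr ⟨le_refl 1, Nat.one_le_pow K 2 (by norm_num)⟩
    calc (0:ℝ) ≤ |W (Λ * ((1:ℕ) : ℝ) / 2 ^ K) - W 0| := abs_nonneg _
    _ ≤ M := by rw [hM]; exact Finset.le_sup' (fun h : ℕ => |W (Λ * (h:ℝ) / 2 ^ K) - W 0|) h1m
  -- Upper bound
  have hub : W t - W 0 ≤ M + Λ * (L:ℝ) / 2 ^ K := by
    have hmem : h ∈ Finset.Icc 1 (2 ^ K) := Finset.mem_Icc.mpr ⟨h1, h2⟩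
    have hMh : W (Λ * (h:ℝ) / 2 ^ K) - W 0 ≤ M := by
      rw [hM]; exact le_trans (le_abs_self _) (Finset.le_sup' (fun h : ℕ => |W (Λ * (h:ℝ) / 2 ^ K) - W 0|) hmem)
    have key : W t - W 0 ≤ (W (Λ * (h:ℝ) / 2 ^ K) - W 0) + (L:ℝ) * a := by
      rw [hW t, hW (Λ * (h:ℝ) / 2 ^ K), hgrid h]
      have hUn' : Un (θ + t) ≤ Un (θ + h * a) :=
        hUn (by linarith)
      have hU' : U (θ + h * a) - U (θ + t) ≤ (L:ℝ) * a := by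
        have := hLip (θ + h * a) (θ + t)
        have habs : |(θ + h * a) - (θ + t)| ≤ a := by
          rw [abs_of_nonneg (by linarith)]
          nlinarith
        have hmul : (L:ℝ) * |(θ + h * a) - (θ + t)| ≤ (L:ℝ) * a :=
          mul_le_mul_of_nonneg_left habs L.coe_nonneg
        linarith [le_abs_self (U (θ + h * a) - U (θ + t))]
      linarith
    have : (L:ℝ) * a = Λ * (L:ℝ) / 2 ^ K := by rw [ha]; ring
    linarith
  -- Lower bound
  have hlb : -(M + Λ * (L:ℝ) / 2 ^ K) ≤ W t - W 0 := by
    have hWlow : -M ≤ W (((h:ℝ) - 1) * a) - W 0 := by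
      rcases eq_or_lt_of_le h1 with heq | hlt
      · have : (h:ℝ) - 1 = 0 := by rw [← heq]; norm_num
        rw [this, zero_mul]
        linarith
      · have hmem : h - 1 ∈ Finset.Icc 1 (2 ^ K) := Finset.mem_Icc.mpr ⟨by omega, by omega⟩
        have hcast : ((h - 1 : ℕ) : ℝ) = (h:ℝ) - 1 := by push_cast [h1]; ring
        have hMh : |W (Λ * ((h - 1 : ℕ):ℝ) / 2 ^ K) - W 0| ≤ M := by
          rw [hM]; exact Finset.le_sup' (fun h : ℕ => |W (Λ * (h:ℝ) / 2 ^ K) - W 0|) hmem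
        rw [hgrid (h-1), hcast] at hMh
        linarith [neg_abs_le (W (((h:ℝ) - 1) * a) - W 0)]
    have key : (W (((h:ℝ) - 1) * a) - W 0) - (L:ℝ) * a ≤ W t - W 0 := by
      rw [hW t, hW (((h:ℝ) - 1) * a)]
      have hUn' : Un (θ + ((h:ℝ) - 1) * a) ≤ Un (θ + t) :=
        hUn (by linarith)
      have hU' : U (θ + t) - U (θ + ((h:ℝ) - 1) * a) ≤ (L:ℝ) * a := by
        have := hLip (θ + t) (θ + ((h:ℝ) - 1) * a)
        have habs : |(θ + t) - (θ + ((h:ℝ) - 1) * a)| ≤ a := by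
          rw [abs_of_nonneg (by linarith)]
          nlinarith
        have hmul : (L:ℝ) * |(θ + t) - (θ + ((h:ℝ) - 1) * a)| ≤ (L:ℝ) * a :=
          mul_le_mul_of_nonneg_left habs L.coe_nonneg
        linarith [le_abs_self (U (θ + t) - U (θ + ((h:ℝ) - 1) * a))]
      linarith
    have : (L:ℝ) * a = Λ * (L:ℝ) / 2 ^ K := by rw [ha]; ring
    linarith
  rw [abs_le]
  exact ⟨by linarith, by linarith⟩
end
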